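/- Define 𝒩 = N + n/2 on ℝ[y₁,…,yₙ] (with N the Euler operator), and let 𝒞 be the linear operator acting on g^k Φ (Φ harmonic homogeneous of degree s) by the scalar s + (n−2)/2. Then 𝒞² = ((n−2)/2)²·Id − c, where c = g·tr − N(N+n−2), as operators on ℝ[y₁,…,yₙ]; i.e. 𝒞 is a square root of ((n−2)/2)² − c. -/

import Mathlib

/-!
Every polynomial is a sum of pieces `g^k Φ` with `Φ` harmonic and homogeneous of degree `s`, so
it suffices to compare both sides on such a piece. There `N` acts by `s + 2k` (Euler's identity)
and `g ∘ tr` by `2k(2s + 2k + n - 2)` (from `tr ∘ g = g ∘ tr + 4N + 2n`), and both sides become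
`(s + (n - 2)/2)²`.

The decomposition is built by induction on the degree: `tr (g^(k+1) Φ)` is a nonzero multiple of
`g^k Φ` when `n > 0`, so `tr P` lifts to some `R` in the span of the pieces of degree `deg P`, and
then `P - R` is itself a harmonic piece.
-/

open MvPolynomial Finset

/-- The index-counting (Euler) operator `N = Σᵢ yᵢ ∂/∂yᵢ` on `ℝ[y₁,…,yₙ]`. -/
noncomputable def opN (n : ℕ) : Module.End ℝ (MvPolynomial (Fin n) ℝ) :=
  ∑ i : Fin n, (LinearMap.mulLeft ℝ (X i)) ∘ₗ (pderiv i).toLinearMap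

/-- Multiplication by `Σᵢ yᵢ²` on `ℝ[y₁,…,yₙ]`. -/
noncomputable def opG (n : ℕ) : Module.End ℝ (MvPolynomial (Fin n) ℝ) :=
  LinearMap.mulLeft ℝ (∑ i : Fin n, X i ^ 2)

/-- The trace (Laplacian) operator `tr = Σᵢ ∂²/∂yᵢ²` on `ℝ[y₁,…,yₙ]`. -/
noncomputable def opTr (n : ℕ) : Module.End ℝ (MvPolynomial (Fin n) ℝ) :=
  ∑ i : Fin n, (pderiv i).toLinearMap ∘ₗ (pderiv i).toLinearMap

section

variable {n : ℕ}

lemma opN_apply (p : MvPolynomial (Fin n) ℝ) : opN n p = ∑ i, X i * pderiv i p := by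
  simp [opN]

lemma opG_apply (p : MvPolynomial (Fin n) ℝ) : opG n p = (∑ i, X i ^ 2) * p := rfl

lemma opG_pow_apply (k : ℕ) (p : MvPolynomial (Fin n) ℝ) :
    (opG n ^ k) p = (∑ i, X i ^ 2) ^ k * p := by
  rw [opG, LinearMap.pow_mulLeft, LinearMap.mulLeft_apply]

lemma opTr_apply (p : MvPolynomial (Fin n) ℝ) : opTr n p = ∑ i, pderiv i (pderiv i p) := by
  simp [opTr]

namespace MvPolynomial.IsHomogeneous

variable {p : MvPolynomial (Fin n) ℝ} {d : ℕ}

lemma opN_eq (hp : p.IsHomogeneous d) : opN n p = (d : ℝ) • p := by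
  rw [opN_apply, hp.sum_X_mul_pderiv, Nat.cast_smul_eq_nsmul]

lemma pderiv_eq_zero (hp : p.IsHomogeneous 0) (i : Fin n) : pderiv i p = 0 := by
  rw [← totalDegree_zero_iff_isHomogeneous, totalDegree_eq_zero_iff_eq_C] at hp
  rw [hp, pderiv_C]

lemma opTr_eq_zero (hp : p.IsHomogeneous d) (hd : d < 2) : opTr n p = 0 := by
  rw [opTr_apply]
  refine Finset.sum_eq_zero fun i _ => (IsHomogeneous.pderiv_eq_zero ?_ i)
  simpa [show d - 1 = 0 by omega] using hp.pderiv (i := i)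

end MvPolynomial.IsHomogeneous

lemma isHomogeneous_opTr {p : MvPolynomial (Fin n) ℝ} {d : ℕ} (hp : p.IsHomogeneous d) :
    (opTr n p).IsHomogeneous (d - 2) := by
  rw [opTr_apply, ← mem_homogeneousSubmodule]
  exact Submodule.sum_mem _ fun i _ => by simpa [Nat.sub_sub] using hp.pderiv.pderiv (i := i)

lemma isHomogeneous_opG_pow {p : MvPolynomial (Fin n) ℝ} {d : ℕ} (hp : p.IsHomogeneous d)
    (k : ℕ) : ((opG n ^ k) p).IsHomogeneous (2 * k + d) := by
  rw [opG_pow_apply]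
  exact ((IsHomogeneous.sum _ _ 2 fun i _ => isHomogeneous_X_pow i 2).pow k).mul hp

lemma pderiv_sum_X_sq (i : Fin n) :
    pderiv i (∑ j, X j ^ 2 : MvPolynomial (Fin n) ℝ) = 2 * X i := by
  simp [pderiv_X, Pi.single_apply]

lemma opTr_opG (p : MvPolynomial (Fin n) ℝ) :
    opTr n (opG n p) = opG n (opTr n p) + (4 : ℝ) • opN n p + (2 * n : ℝ) • p := by
  have key (i : Fin n) : pderiv i (pderiv i ((∑ j, X j ^ 2) * p)) =
      (∑ j, X j ^ 2) * pderiv i (pderiv i p) + 4 * (X i * pderiv i p) + 2 * p := by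
    have h2 : pderiv i (2 : MvPolynomial (Fin n) ℝ) = 0 := by
      simpa using (pderiv i).map_natCast 2
    simp only [Derivation.leibniz, pderiv_sum_X_sq, smul_eq_mul, map_add, pderiv_X_self, h2]
    ring
  simp only [opTr_apply, opG_apply, opN_apply, key, sum_add_distrib, ← mul_sum, sum_const,
    card_univ, Fintype.card_fin, smul_eq_C_mul, map_ofNat, map_mul, map_natCast, nsmul_eq_mul]
  ring

section Harmonic

variable {Φ : MvPolynomial (Fin n) ℝ} {s : ℕ}

lemma opTr_opG_pow_succ (hΦ : Φ.IsHomogeneous s) (htr : opTr n Φ = 0) (k : ℕ) :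
    opTr n ((opG n ^ (k + 1)) Φ) = (2 * (k + 1) * (2 * s + 2 * k + n) : ℝ) • (opG n ^ k) Φ := by
  induction k with
  | zero =>
    rw [zero_add, pow_one, pow_zero, Module.End.one_apply, opTr_opG, htr, map_zero, hΦ.opN_eq]
    push_cast
    module
  | succ k ih =>
    rw [pow_succ', Module.End.mul_apply, opTr_opG, ih, map_smul, ← Module.End.mul_apply,
      ← pow_succ', (isHomogeneous_opG_pow hΦ (k + 1)).opN_eq]
    push_cast
    module

lemma opG_opTr_opG_pow (hΦ : Φ.IsHomogeneous s) (htr : opTr n Φ = 0) (k : ℕ) :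
    opG n (opTr n ((opG n ^ k) Φ)) = (2 * k * (2 * s + 2 * k - 2 + n) : ℝ) • (opG n ^ k) Φ := by
  cases k with
  | zero => simp [htr]
  | succ k =>
    rw [opTr_opG_pow_succ hΦ htr, map_smul, ← Module.End.mul_apply, ← pow_succ']
    congr 1
    push_cast
    ring

end Harmonic

def harmonicPieces (n d : ℕ) : Set (MvPolynomial (Fin n) ℝ) :=
  {q | ∃ s k Φ, Φ.IsHomogeneous s ∧ opTr n Φ = 0 ∧ 2 * k + s = d ∧ (opG n ^ k) Φ = q}

lemma span_harmonicPieces_le_homogeneousSubmodule (d : ℕ) :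
    Submodule.span ℝ (harmonicPieces n d) ≤ homogeneousSubmodule (Fin n) ℝ d := by
  rw [Submodule.span_le]
  rintro _ ⟨s, k, Φ, hΦ, -, rfl, rfl⟩
  exact isHomogeneous_opG_pow hΦ k

lemma span_harmonicPieces_le_map_opTr (hn : 0 < n) (d : ℕ) :
    Submodule.span ℝ (harmonicPieces n d) ≤
      (Submodule.span ℝ (harmonicPieces n (d + 2))).map (opTr n) := by
  rw [Submodule.span_le]
  rintro _ ⟨s, k, Φ, hΦ, htr, rfl, rfl⟩
  have hβ : (2 * (k + 1) * (2 * s + 2 * k + n) : ℝ) ≠ 0 := by positivity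
  refine ⟨(2 * (k + 1) * (2 * s + 2 * k + n) : ℝ)⁻¹ • (opG n ^ (k + 1)) Φ,
    Submodule.smul_mem _ _ (Submodule.subset_span ⟨s, k + 1, Φ, hΦ, htr, by ring, rfl⟩), ?_⟩
  rw [map_smul, opTr_opG_pow_succ hΦ htr, smul_smul, inv_mul_cancel₀ hβ, one_smul]

lemma mem_span_harmonicPieces {d : ℕ} {P : MvPolynomial (Fin n) ℝ} (hP : P.IsHomogeneous d) :
    P ∈ Submodule.span ℝ (harmonicPieces n d) := by
  induction d using Nat.strong_induction_on generalizing P with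
  | _ d ih =>
  by_cases htr : opTr n P = 0
  · exact Submodule.subset_span ⟨d, 0, P, hP, htr, by ring, by simp⟩
  have hn : 0 < n := Nat.pos_of_ne_zero <| by rintro rfl; simp [opTr] at htr
  obtain ⟨e, rfl⟩ : ∃ e, d = e + 2 :=
    ⟨d - 2, by have := mt hP.opTr_eq_zero htr; omega⟩
  obtain ⟨R, hR, hRP⟩ := span_harmonicPieces_le_map_opTr hn e
    (ih e (by omega) (isHomogeneous_opTr hP))
  have hPR : P - R ∈ harmonicPieces n (e + 2) :=
    ⟨e + 2, 0, P - R, hP.sub (span_harmonicPieces_le_homogeneousSubmodule _ hR),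
      by rw [map_sub, hRP, sub_self], by ring, by simp⟩
  simpa using Submodule.add_mem _ (Submodule.subset_span hPR) hR

lemma span_iUnion_harmonicPieces : Submodule.span ℝ (⋃ d, harmonicPieces n d) = ⊤ := by
  refine eq_top_iff.2 fun p _ => ?_
  rw [← sum_homogeneousComponent p]
  exact Submodule.sum_mem _ fun d _ => Submodule.span_mono (Set.subset_iUnion _ d)
    (mem_span_harmonicPieces (homogeneousComponent_isHomogeneous d p))

end

/-- if `𝒞` acts on each `g^k Φ` (with `Φ` harmonic homogeneous of degree
`s`) by the scalar `s + (n−2)/2`, then `𝒞² = ((n−2)/2)²·Id − c`, where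
`c = g·tr − N(N+n−2)`. -/
theorem stmt5 (n : ℕ) (C : Module.End ℝ (MvPolynomial (Fin n) ℝ))
    (hC : ∀ (s k : ℕ) (Φ : MvPolynomial (Fin n) ℝ),
      opN n Φ = (s : ℝ) • Φ → opTr n Φ = 0 →
      C ((opG n ^ k) Φ) = ((s : ℝ) + ((n : ℝ) - 2) / 2) • (opG n ^ k) Φ) :
    C * C = ((((n : ℝ) - 2) / 2) ^ 2) • 1 -
      (opG n * opTr n - opN n * (opN n + ((n : ℝ) - 2) • 1)) := by
  refine LinearMap.ext_on span_iUnion_harmonicPieces ?_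
  rintro _ ⟨_, ⟨d, rfl⟩, s, k, Φ, hΦ, htr, -, rfl⟩
  have hCΦ := hC s k Φ hΦ.opN_eq htr
  have hNΦ := (isHomogeneous_opG_pow hΦ k).opN_eq
  simp only [Module.End.mul_apply, LinearMap.sub_apply, LinearMap.smul_apply, LinearMap.add_apply,
    Module.End.one_apply, hCΦ, map_smul, map_add, hNΦ, opG_opTr_opG_pow hΦ htr, smul_smul]
  push_cast
  match_scalars
  ring
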